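/- Let $c(n,k)$ denote the unsigned Stirling numbers of the first kind ($c(n,k) = S_0(n,k)$, satisfying $c(n+1,k) = n\,c(n,k) + c(n,k-1)$). Then for each fixed $n$, the ratio $c(n-1,k-1)/c(n,k)$ is increasing in $k$ for $1 \le k \le n$. -/

import Mathlib

/-!
By the recurrence, `c(n, k) / c(n-1, k-1) = 1 + (n-1) · c(n-1, k) / c(n-1, k-1)`, so the claim
amounts to `k ↦ c(n-1, k) / c(n-1, k-1)` being decreasing, i.e. to the log-concavity of `c(n-1, ·)`.
Multiplying a generating polynomial by `x + m` with `m ≥ 0` preserves log-concavity in the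
cross-ratio form `a k * a (l + 1) ≤ a (k + 1) * a l` for `k ≤ l`, and the generating polynomial of
`c(n, ·)` is `x (x + 1) ⋯ (x + n - 1)`.
-/

/-- Unsigned Stirling numbers of the first kind:
`c(n+1,k) = n c(n,k) + c(n,k-1)`, `c(0,0) = 1`, `c(n,0) = 0` for `n ≥ 1`,
`c(n,k) = 0` for `k > n`. -/
def stirlingFirst : ℕ → ℕ → ℕ
  | 0, k => if k = 0 then 1 else 0
  | n + 1, k =>
      if k = 0 then 0
      else n * stirlingFirst n k + stirlingFirst n (k - 1)

/-- Equivalent to log-concavity `a k * a (k + 2) ≤ a (k + 1) ^ 2` for positive sequences, but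
unlike it this form is an invariant of the recurrence in `SuccRatioAntitone.of_eq_mul_add`, whose
cross term compares `a k * a (l + 2)` with `a (k + 2) * a l`. -/
def SuccRatioAntitone {R : Type*} [Mul R] [LE R] (a : ℕ → R) : Prop :=
  ∀ ⦃k l : ℕ⦄, k ≤ l → a k * a (l + 1) ≤ a (k + 1) * a l

theorem SuccRatioAntitone.of_eq_mul_add {R : Type*} [CommSemiring R] [PartialOrder R]
    [IsOrderedRing R] {a b : ℕ → R} {m : R} (ha : SuccRatioAntitone a) (ha₀ : ∀ k, 0 ≤ a k)
    (hm : 0 ≤ m) (hb₀ : b 0 = m * a 0) (hb : ∀ k, b (k + 1) = m * a (k + 1) + a k) :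
    SuccRatioAntitone b := by
  have hmm : 0 ≤ m * m := mul_nonneg hm hm
  rintro (_ | k) (_ | l) hkl
  · exact (mul_comm _ _).le
  · rw [hb₀, hb, hb, hb]
    calc m * a 0 * (m * a (l + 2) + a (l + 1))
        = m * m * (a 0 * a (l + 2)) + m * (a 0 * a (l + 1)) := by ring
      _ ≤ m * m * (a 1 * a (l + 1)) + m * (a 0 * a (l + 1)) := by
          gcongr m * m * ?_ + _
          exact ha (Nat.zero_le _)
      _ ≤ m * m * (a 1 * a (l + 1)) + m * (a 0 * a (l + 1)) + (m * (a 1 * a l) + a 0 * a l) :=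
          le_add_of_nonneg_right <|
            add_nonneg (mul_nonneg hm (mul_nonneg (ha₀ _) (ha₀ _))) (mul_nonneg (ha₀ _) (ha₀ _))
      _ = (m * a 1 + a 0) * (m * a (l + 1) + a l) := by ring
  · omega
  · have hkl : k ≤ l := by omega
    have middle : a k * a (l + 2) ≤ a (k + 2) * a l := by
      rcases hkl.lt_or_eq with hlt | rfl
      · exact (ha (by omega : k ≤ l + 1)).trans (ha (by omega : k + 1 ≤ l))
      · exact (mul_comm _ _).le
    rw [hb, hb, hb, hb]
    calc (m * a (k + 1) + a k) * (m * a (l + 2) + a (l + 1))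
        = m * m * (a (k + 1) * a (l + 2)) + m * (a k * a (l + 2))
          + m * (a (k + 1) * a (l + 1)) + a k * a (l + 1) := by ring
      _ ≤ m * m * (a (k + 2) * a (l + 1)) + m * (a (k + 2) * a l)
          + m * (a (k + 1) * a (l + 1)) + a (k + 1) * a l := by
          gcongr m * m * ?_ + m * ?_ + _ + ?_
          · exact ha (by omega)
          · exact ha hkl
      _ = (m * a (k + 2) + a (k + 1)) * (m * a (l + 1) + a l) := by ring

theorem stirlingFirst_eq_nat_stirlingFirst : stirlingFirst = Nat.stirlingFirst := by
  funext n k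
  induction n generalizing k with
  | zero => cases k <;> rfl
  | succ n ih => cases k <;> simp [stirlingFirst, Nat.stirlingFirst, ih]

theorem Nat.succRatioAntitone_stirlingFirst (n : ℕ) :
    SuccRatioAntitone (Nat.stirlingFirst n) := by
  induction n with
  | zero => intro k l _; simp
  | succ n ih =>
    refine ih.of_eq_mul_add (fun _ ↦ Nat.zero_le _) (Nat.zero_le n) ?_
      (Nat.stirlingFirst_succ_succ n)
    cases n <;> simp

theorem Nat.stirlingFirst_pos {n k : ℕ} (hk : k ≠ 0) (hkn : k ≤ n) :
    0 < Nat.stirlingFirst n k := by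
  induction n generalizing k with
  | zero => omega
  | succ n ih =>
    obtain ⟨j, rfl⟩ := Nat.exists_eq_succ_of_ne_zero hk
    rcases j.eq_zero_or_pos with rfl | hj
    · simpa [Nat.stirlingFirst_one_right] using n.factorial_pos
    · rw [Nat.stirlingFirst_succ_succ]
      exact Nat.add_pos_right _ (ih hj.ne' (by omega))

theorem Nat.stirlingFirst_mul_succ_le (n k : ℕ) :
    Nat.stirlingFirst n k * Nat.stirlingFirst (n + 1) (k + 2) ≤
      Nat.stirlingFirst n (k + 1) * Nat.stirlingFirst (n + 1) (k + 1) := by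
  rw [Nat.stirlingFirst_succ_succ n (k + 1), Nat.stirlingFirst_succ_succ n k]
  have := Nat.succRatioAntitone_stirlingFirst n (Nat.le_succ k)
  nlinarith

/-- For fixed `n`, the ratio `c(n-1,k-1)/c(n,k)` is increasing in `k` on
`1 ≤ k ≤ n`. -/
theorem stirlingFirst_ratio_increasing (n k : ℕ) (hk1 : 1 ≤ k) (hkn : k + 1 ≤ n) :
    (stirlingFirst (n - 1) (k - 1) : ℝ) / stirlingFirst n k ≤
      (stirlingFirst (n - 1) k : ℝ) / stirlingFirst n (k + 1) := by
  obtain ⟨m, rfl⟩ : ∃ m, n = m + 1 := ⟨n - 1, by omega⟩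
  obtain ⟨j, rfl⟩ : ∃ j, k = j + 1 := ⟨k - 1, by omega⟩
  simp only [Nat.add_sub_cancel, stirlingFirst_eq_nat_stirlingFirst]
  have hpos₁ := Nat.stirlingFirst_pos (n := m + 1) (k := j + 1) (by omega) (by omega)
  have hpos₂ := Nat.stirlingFirst_pos (n := m + 1) (k := j + 2) (by omega) (by omega)
  rw [div_le_div_iff₀ (by exact_mod_cast hpos₁) (by exact_mod_cast hpos₂)]
  exact_mod_cast Nat.stirlingFirst_mul_succ_le m j
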